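/- arXiv:1702.06088 — 6 statements merged into one kernel-verified Lean document; each statement's English description precedes it below -/
import Mathlib

section
/- For pairwise disjoint infinite sets (X_i)_{i∈I} with union X, let G be the group of permutations g of X such that the index of xg differs from the index of x for only finitely many x∈X. For a reflexive binary relation ρ on I, let S_ρ be the set of g∈G such that for all x, (ι(x), ι(xg))∈ρ, where ι(x) is the index of the set containing x. Then for reflexive relations ρ, σ on I, the elementwise product S_ρ · S_σ equals S_{ρ∘σ}, where ρ∘σ is the composite relation {(i,k) : ∃j, (i,j)∈ρ ∧ (j,k)∈σ}. -/
open Pointwise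

/-- The group of permutations of `X` (written as acting on the right, i.e. as elements of the
opposite of `Equiv.Perm X`, so that products compose left-to-right) that move only finitely
many elements of `X` between the fibers of `ι : X → I`. -/
def restrictedPermGroup {X I : Type*} (ι : X → I) : Set (Equiv.Perm X)ᵐᵒᵖ :=
  {g | {x | ι (g.unop x) ≠ ι x}.Finite}

/-- For a binary relation `ρ` on `I`, the set `S_ρ` of permutations in the restricted
permutation group which move an element of the fiber over `i` into the fiber over `j`
only when `ρ i j` holds. -/
def relSet {X I : Type*} (ι : X → I) (ρ : I → I → Prop) : Set (Equiv.Perm X)ᵐᵒᵖ :=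
  {g | g ∈ restrictedPermGroup ι ∧ ∀ x, ρ (ι x) (ι (g.unop x))}

/-!
Given `f ∈ S_{ρ∘σ}`, choose for every `x` an intermediate index `κ x` with `ρ (ι x) (κ x)` and
`σ (κ x) (ι (f x))`, taking `κ x = ι x` whenever `f` keeps `x` in its fiber (possible by
reflexivity). Then `κ` differs from `ι` at finitely many points, so each fiber of `κ` differs
from the corresponding infinite fiber of `ι` by finitely many points and has the same
cardinality. Matching the fibers gives `g ∈ S_ρ` with `ι ∘ g = κ`, and `g⁻¹ f ∈ S_σ`.
-/

namespace Cardinal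

variable {α : Type*} {s t : Set α}

theorem mk_le_mk_of_sdiff_finite (hst : (s \ t).Finite) (ht : t.Infinite) : #s ≤ #t := by
  have := ht.to_subtype
  calc #s ≤ #(s \ t : Set α) + #t := le_mk_sdiff_add_mk s t
    _ = #t := by
      rw [add_comm]
      exact add_eq_left (aleph0_le_mk _) (hst.lt_aleph0.le.trans (aleph0_le_mk _))

theorem mk_eq_mk_of_sdiff_finite (hst : (s \ t).Finite) (hts : (t \ s).Finite)
    (ht : t.Infinite) : #s = #t :=
  have hs : s.Infinite := fun hs => ht ((hts.union hs).subset (Set.subset_sdiff_union t s))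
  (mk_le_mk_of_sdiff_finite hst ht).antisymm (mk_le_mk_of_sdiff_finite hts hs)

end Cardinal

theorem Equiv.Perm.exists_comp_eq_of_finite_ne {X I : Type*} {ι κ : X → I}
    (hfib : ∀ i, {x | ι x = i}.Infinite) (hκ : {x | κ x ≠ ι x}.Finite) :
    ∃ g : Equiv.Perm X, ∀ x, ι (g x) = κ x := by
  have hfiber (i : I) : Nonempty ({x // κ x = i} ≃ {x // ι x = i}) := by
    refine Cardinal.eq.mp
      (Cardinal.mk_eq_mk_of_sdiff_finite (hκ.subset ?_) (hκ.subset ?_) (hfib i))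
    · rintro x ⟨hκx, hιx⟩ h
      exact hιx (h.symm.trans hκx)
    · rintro x ⟨hιx, hκx⟩ h
      exact hκx (h.trans hιx)
  exact ⟨Equiv.ofFiberEquiv fun i => (hfiber i).some, Equiv.ofFiberEquiv_map _⟩

section restrictedPermGroup

variable {X I : Type*} {ι : X → I} {g h : (Equiv.Perm X)ᵐᵒᵖ}

theorem mul_mem_restrictedPermGroup (hg : g ∈ restrictedPermGroup ι)
    (hh : h ∈ restrictedPermGroup ι) : g * h ∈ restrictedPermGroup ι := by
  refine (hg.union (hh.preimage g.unop.injective.injOn)).subset fun x hx => ?_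
  by_cases hgx : ι (g.unop x) = ι x
  · exact Or.inr fun hhx => hx (hhx.trans hgx)
  · exact Or.inl hgx

theorem inv_mem_restrictedPermGroup (hg : g ∈ restrictedPermGroup ι) :
    g⁻¹ ∈ restrictedPermGroup ι := by
  refine (hg.image g.unop).subset fun x hx => ⟨g.unop⁻¹ x, fun h => hx ?_, by simp⟩
  simpa using h.symm

end restrictedPermGroup

theorem exists_intermediate_of_mem_relSet_comp {X I : Type*} {ι : X → I} {ρ σ : I → I → Prop}
    (hρ : Reflexive ρ) (hσ : Reflexive σ) {f : (Equiv.Perm X)ᵐᵒᵖ}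
    (hf : f ∈ relSet ι (Relation.Comp ρ σ)) :
    ∃ κ : X → I, {x | κ x ≠ ι x}.Finite ∧ ∀ x, ρ (ι x) (κ x) ∧ σ (κ x) (ι (f.unop x)) := by
  have hmid (x : X) :
      ∃ j, (ρ (ι x) j ∧ σ j (ι (f.unop x))) ∧ (ι (f.unop x) = ι x → j = ι x) := by
    by_cases hfx : ι (f.unop x) = ι x
    · exact ⟨ι x, ⟨hρ _, hfx ▸ hσ _⟩, fun _ => rfl⟩
    · exact (hf.2 x).imp fun j hj => ⟨hj, fun h => absurd h hfx⟩
  choose κ hκ hκι using hmid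
  exact ⟨κ, hf.1.subset fun x hx hfx => hx (hκι x hfx), hκ⟩

/-- If all fibers of `ι` are infinite and `ρ`, `σ` are reflexive relations on `I`, then
`S_ρ · S_σ = S_{ρ∘σ}`. -/
theorem relSet_mul_relSet {X I : Type*} (ι : X → I)
    (hfib : ∀ i : I, {x | ι x = i}.Infinite)
    (ρ σ : I → I → Prop) (hρ : Reflexive ρ) (hσ : Reflexive σ) :
    relSet ι ρ * relSet ι σ = relSet ι (Relation.Comp ρ σ) := by
  ext f
  constructor
  · rintro ⟨g, ⟨hg, hgρ⟩, h, ⟨hh, hhσ⟩, rfl⟩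
    exact ⟨mul_mem_restrictedPermGroup hg hh, fun x => ⟨_, hgρ x, hhσ _⟩⟩
  intro hf
  obtain ⟨κ, hκ, hκρσ⟩ := exists_intermediate_of_mem_relSet_comp hρ hσ hf
  obtain ⟨g, hg⟩ := Equiv.Perm.exists_comp_eq_of_finite_ne hfib hκ
  have hgR : MulOpposite.op g ∈ restrictedPermGroup ι := by
    simpa [restrictedPermGroup, hg] using hκ
  refine ⟨MulOpposite.op g, ⟨hgR, fun x => (hg x).symm ▸ (hκρσ x).1⟩, (MulOpposite.op g)⁻¹ * f,
    ⟨mul_mem_restrictedPermGroup (inv_mem_restrictedPermGroup hgR) hf.1, fun z => ?_⟩,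
    mul_inv_cancel_left _ _⟩
  obtain ⟨x, rfl⟩ := g.surjective z
  simpa [hg] using (hκρσ x).2
end

section
/- With notation as above, the map ρ ↦ S_ρ from reflexive binary relations on I to subsets of G is injective: if ρ ≠ σ are reflexive relations on I, then S_ρ ≠ S_σ. -/
open Pointwise

/-- Shift permutation on ℕ ⊕ ℕ: inl 0 ↦ inr 0, inl (n+1) ↦ inl n, inr n ↦ inr (n+1). -/
def shiftPerm : Equiv.Perm (ℕ ⊕ ℕ) where
  toFun x := match x with
    | .inl 0 => .inr 0
    | .inl (n+1) => .inl n
    | .inr n => .inr (n+1)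
  invFun x := match x with
    | .inl n => .inl (n+1)
    | .inr 0 => .inl 0
    | .inr (n+1) => .inr n
  left_inv x := by rcases x with (_|n)|n <;> rfl
  right_inv x := by rcases x with n|(_|n) <;> rfl

lemma relSet_ne_of {X I : Type*} (ι : X → I)
    (hfib : ∀ i : I, {x | ι x = i}.Infinite)
    {ρ σ : I → I → Prop} (hρ : Reflexive ρ) {i j : I} (hijne : i ≠ j)
    (hij : ρ i j) (hns : ¬ σ i j) : relSet ι ρ ≠ relSet ι σ := by
  classical
  intro heq
  obtain a := (hfib i).natEmbedding
  obtain b := (hfib j).natEmbedding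
  set c : ℕ ⊕ ℕ ↪ X := ⟨fun x => match x with
    | .inl n => (a n : X)
    | .inr n => (b n : X), by
      rintro (m|m) (n|n) h <;> simp only at h
      · exact congrArg Sum.inl (a.injective (Subtype.ext h))
      · exact absurd ((a m).2.symm.trans (by rw [h]; exact (b n).2)) hijne
      · exact absurd ((b m).2.symm.trans (by rw [h]; exact (a n).2)) (Ne.symm hijne)
      · exact congrArg Sum.inr (b.injective (Subtype.ext h))⟩ with hc
  have hca : ∀ n, ι (c (.inl n)) = i := fun n => (a n).2
  have hcb : ∀ n, ι (c (.inr n)) = j := fun n => (b n).2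
  set g : Equiv.Perm X := shiftPerm.viaEmbedding c with hg
  have happ : ∀ y, g (c y) = c (shiftPerm y) := fun y => shiftPerm.viaEmbedding_apply c y
  have hfix : ∀ x, x ∉ Set.range c → g x = x := fun x hx =>
    shiftPerm.viaEmbedding_apply_of_notMem c x hx
  have hmem : MulOpposite.op g ∈ relSet ι ρ := by
    constructor
    · apply Set.Finite.subset (Set.finite_singleton (c (.inl 0)))
      intro x hx
      simp only [Set.mem_setOf_eq, MulOpposite.unop_op] at hx
      by_cases hr : x ∈ Set.range c
      · obtain ⟨y, rfl⟩ := hr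
        rcases y with (_|n)|n
        · rfl
        · exact absurd (by rw [happ]; exact (hca n).trans (hca (n+1)).symm) hx
        · exact absurd (by rw [happ]; exact (hcb (n+1)).trans (hcb n).symm) hx
      · exact absurd (by rw [hfix x hr]) hx
    · intro x
      simp only [MulOpposite.unop_op]
      by_cases hr : x ∈ Set.range c
      · obtain ⟨y, rfl⟩ := hr
        rcases y with (_|n)|n
        · rw [happ]; show ρ (ι (c (.inl 0))) (ι (c (.inr 0)))
          rw [hca, hcb]; exact hij
        · rw [happ]; show ρ (ι (c (.inl (n+1)))) (ι (c (.inl n)))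
          rw [hca, hca]; exact hρ i
        · rw [happ]; show ρ (ι (c (.inr n))) (ι (c (.inr (n+1))))
          rw [hcb, hcb]; exact hρ j
      · rw [hfix x hr]; exact hρ _
  rw [heq] at hmem
  have := hmem.2 (c (.inl 0))
  simp only [MulOpposite.unop_op] at this
  rw [happ, hca] at this
  have hred : shiftPerm (Sum.inl 0) = Sum.inr 0 := rfl
  rw [hred, hcb] at this
  exact hns this

/-- The map `ρ ↦ S_ρ` is injective on reflexive relations, provided all fibers of `ι`
are infinite. -/
theorem relSet_injective {X I : Type*} (ι : X → I)
    (hfib : ∀ i : I, {x | ι x = i}.Infinite)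
    (ρ σ : I → I → Prop) (hρ : Reflexive ρ) (hσ : Reflexive σ)
    (hne : ρ ≠ σ) : relSet ι ρ ≠ relSet ι σ := by
  have : ∃ i j, ¬ (ρ i j ↔ σ i j) := by
    by_contra h
    push_neg at h
    exact hne (by funext i j; exact propext (h i j))
  obtain ⟨i, j, hij⟩ := this
  have hijne : i ≠ j := by rintro rfl; exact hij ⟨fun _ => hσ i, fun _ => hρ i⟩
  rw [iff_iff_implies_and_implies, not_and_or] at hij
  push_neg at hij
  rcases hij with ⟨h1, h2⟩ | ⟨h1, h2⟩
  · exact relSet_ne_of ι hfib hρ hijne h1 h2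
  · exact (relSet_ne_of ι hfib hσ hijne h1 h2).symm
end

section
/- With notation as above, for a reflexive binary relation ρ on I, the set S_ρ is closed under composition of permutations (i.e., is a submonoid of G) if and only if ρ is transitive (i.e., ρ is a preorder). -/
open Pointwise

/-- Auxiliary: there is a permutation moving a prescribed point `a` of the fiber over `i`
into the fiber over `j`, and otherwise preserving all fibers. -/
lemma exists_line_perm {X I : Type*} (ι : X → I) (hfib : ∀ i : I, {x | ι x = i}.Infinite)
    {i j : I} (hij : i ≠ j) (a : X) (ha : ι a = i) :
    ∃ g : Equiv.Perm X, (∀ x, ι (g x) = ι x ∨ x = a) ∧ ι (g a) = j := by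
  classical
  have hsi : ({x | ι x = i} \ {a}).Infinite := (hfib i).diff (Set.finite_singleton a)
  set u := hsi.natEmbedding with hu
  set v := (hfib j).natEmbedding with hv
  let F : ℤ → X := fun n =>
    if n < -1 then (u (-(n+2)).toNat : X)
    else if n = -1 then a else (v n.toNat : X)
  have hFneg : ∀ n : ℤ, n < -1 → F n = (u (-(n+2)).toNat : X) := by
    intro n hn; simp only [F, if_pos hn]
  have hFm1 : F (-1) = a := by norm_num [F]
  have hFpos : ∀ n : ℤ, 0 ≤ n → F n = (v n.toNat : X) := by
    intro n hn
    have h1 : ¬ n < -1 := by omega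
    have h2 : n ≠ -1 := by omega
    simp only [F, if_neg h1, if_neg h2]
  have hui : ∀ m : ℕ, ι (u m : X) = i := fun m => (u m).2.1
  have hua : ∀ m : ℕ, (u m : X) ≠ a := fun m => by
    have := (u m).2.2; simpa using this
  have hvj : ∀ m : ℕ, ι (v m : X) = j := fun m => (v m).2
  have hιF : ∀ n : ℤ, (n ≤ -1 → ι (F n) = i) ∧ (0 ≤ n → ι (F n) = j) := by
    intro n
    constructor
    · intro hn
      rcases lt_or_eq_of_le hn with h | h
      · rw [hFneg n h]; exact hui _
      · rw [h, hFm1]; exact ha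
    · intro hn; rw [hFpos n hn]; exact hvj _
  have hinj : Function.Injective F := by
    intro m n hmn
    rcases lt_trichotomy m (-1) with hm | hm | hm <;>
      rcases lt_trichotomy n (-1) with hn | hn | hn
    · rw [hFneg m hm, hFneg n hn] at hmn
      have := u.injective (Subtype.coe_injective hmn)
      omega
    · exfalso; rw [hFneg m hm, hn, hFm1] at hmn; exact hua _ hmn
    · exfalso
      rw [hFneg m hm, hFpos n (by omega)] at hmn
      exact hij (by rw [← hui (-(m+2)).toNat, hmn, hvj])
    · exfalso; rw [hm, hFm1, hFneg n hn] at hmn; exact hua _ hmn.symm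
    · omega
    · exfalso
      rw [hm, hFm1, hFpos n (by omega)] at hmn
      exact hij (by rw [← ha, hmn, hvj])
    · exfalso
      rw [hFpos m (by omega), hFneg n hn] at hmn
      exact hij (by rw [← hui (-(n+2)).toNat, ← hmn, hvj])
    · exfalso
      rw [hn, hFm1, hFpos m (by omega)] at hmn
      exact hij (by rw [← ha, ← hmn, hvj])
    · rw [hFpos m (by omega), hFpos n (by omega)] at hmn
      have := v.injective (Subtype.coe_injective hmn)
      omega
  let f : ℤ ↪ X := ⟨F, hinj⟩
  let g := (Equiv.addRight (1 : ℤ)).viaEmbedding f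
  have hgF : ∀ n : ℤ, g (F n) = F (n + 1) := fun n =>
    Equiv.Perm.viaEmbedding_apply (Equiv.addRight (1 : ℤ)) f n
  have hga : ι (g a) = j := by
    rw [← hFm1, hgF (-1)]
    norm_num
    exact (hιF 0).2 le_rfl
  refine ⟨g, fun x => ?_, hga⟩
  by_cases hx : x ∈ Set.range f
  · obtain ⟨n, rfl⟩ := hx
    show ι (g (F n)) = ι (F n) ∨ F n = a
    rcases lt_trichotomy n (-1) with hn | hn | hn
    · left
      rw [hgF n, (hιF n).1 (by omega), (hιF (n+1)).1 (by omega)]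
    · right; rw [hn, hFm1]
    · left
      rw [hgF n, (hιF n).2 (by omega), (hιF (n+1)).2 (by omega)]
  · left
    rw [Equiv.Perm.viaEmbedding_apply_of_notMem (Equiv.addRight (1 : ℤ)) f x hx]

/-- For a reflexive relation `ρ` on `I` (with all fibers of `ι` infinite), `S_ρ` is a
submonoid of the restricted permutation group if and only if `ρ` is transitive
(i.e. a preorder). -/
theorem relSet_submonoid_iff_transitive {X I : Type*} (ι : X → I)
    (hfib : ∀ i : I, {x | ι x = i}.Infinite)
    (ρ : I → I → Prop) (hρ : Reflexive ρ) :
    (∃ M : Submonoid (Equiv.Perm X)ᵐᵒᵖ, (M : Set (Equiv.Perm X)ᵐᵒᵖ) = relSet ι ρ) ↔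
      Transitive ρ := by
  constructor
  · rintro ⟨M, hM⟩ a b c hab hbc
    by_cases hab' : a = b
    · exact hab' ▸ hbc
    by_cases hbc' : b = c
    · exact hbc' ▸ hab
    obtain ⟨x, hx⟩ := (hfib a).nonempty
    obtain ⟨g, hg, hga⟩ := exists_line_perm ι hfib hab' x hx
    obtain ⟨h, hh, hhb⟩ := exists_line_perm ι hfib hbc' (g x) hga
    have hgM : MulOpposite.op g ∈ M := by
      rw [← SetLike.mem_coe, hM]
      refine ⟨Set.Finite.subset (Set.finite_singleton x) ?_, fun y => ?_⟩
      · intro y hy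
        rcases hg y with h1 | h1
        · exact absurd h1 hy
        · exact h1
      · rcases hg y with h1 | h1
        · rw [MulOpposite.unop_op, h1]; exact hρ _
        · subst h1; rw [MulOpposite.unop_op, hx, hga]; exact hab
    have hhM : MulOpposite.op h ∈ M := by
      rw [← SetLike.mem_coe, hM]
      refine ⟨Set.Finite.subset (Set.finite_singleton (g x)) ?_, fun y => ?_⟩
      · intro y hy
        rcases hh y with h1 | h1
        · exact absurd h1 hy
        · exact h1
      · rcases hh y with h1 | h1
        · rw [MulOpposite.unop_op, h1]; exact hρ _
        · subst h1; rw [MulOpposite.unop_op, hga, hhb]; exact hbc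
    have hmul : MulOpposite.op g * MulOpposite.op h ∈ M := mul_mem hgM hhM
    rw [← SetLike.mem_coe, hM] at hmul
    have := hmul.2 x
    rw [MulOpposite.unop_mul, MulOpposite.unop_op, MulOpposite.unop_op,
      Equiv.Perm.mul_apply, hx, hhb] at this
    exact this
  · intro htrans
    refine ⟨{ carrier := relSet ι ρ, mul_mem' := ?_, one_mem' := ?_ }, rfl⟩
    · rintro g h ⟨hgfin, hgρ⟩ ⟨hhfin, hhρ⟩
      constructor
      · refine Set.Finite.subset (hgfin.union (hhfin.preimage g.unop.injective.injOn)) ?_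
        intro x hx
        simp only [Set.mem_setOf_eq, MulOpposite.unop_mul, Equiv.Perm.mul_apply] at hx
        by_cases h1 : ι (g.unop x) = ι x
        · right
          simp only [Set.mem_preimage, Set.mem_setOf_eq]
          rw [h1]
          exact hx
        · exact Or.inl h1
      · intro x
        rw [MulOpposite.unop_mul, Equiv.Perm.mul_apply]
        exact htrans (hgρ x) (hhρ (g.unop x))
    · constructor
      · simp [restrictedPermGroup]
      · intro x; simp only [MulOpposite.unop_one, Equiv.Perm.one_apply]; exact hρ _
end

section
/- Let I = {1,…,n} with the partial order ⪯ whose only nontrivial relations are 2i ⪯ 2i−1 and 2i ⪯ 2i+1 (each even element below its adjacent odd elements), together with reflexivity. Then the n-fold alternating composite ⪯ ∘ ⪯⁻¹ ∘ ⪯ ∘ … (n factors, starting with ⪯) equals the total relation I×I, but no proper initial subcomposite (with fewer than n factors) equals I×I. -/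
/-- The partial order `⪯` on `I = {1,…,n} ⊆ ℕ` whose only nontrivial relations put each
even element below its adjacent odd elements: `a ⪯ b` iff `a = b` (with `a ∈ {1,…,n}`),
or `a` is even, `a ∈ {1,…,n}`, and `b = a - 1` or `b = a + 1` (with `b ≤ n`). -/
def zigzagRel (n : ℕ) : ℕ → ℕ → Prop := fun a b =>
  (a = b ∧ 1 ≤ a ∧ a ≤ n) ∨
    (Even a ∧ 1 ≤ a ∧ a ≤ n ∧ 1 ≤ b ∧ b ≤ n ∧ (b = a - 1 ∨ b = a + 1))

/-- The `m`-fold alternating composite `r ∘ r⁻¹ ∘ r ∘ …` (`m` factors, starting with `r`). -/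
def altComp {α : Type*} (r : α → α → Prop) : ℕ → (α → α → Prop)
  | 0 => Eq
  | m + 1 => Relation.Comp (altComp r m) (if Even m then r else flip r)

/-- A single (possibly flipped) zigzag step: basic facts. -/
lemma zig_step_prop {n m c b : ℕ}
    (h : (if Even m then zigzagRel n else flip (zigzagRel n)) c b) :
    1 ≤ c ∧ c ≤ n ∧ 1 ≤ b ∧ b ≤ n ∧ b ≤ c + 1 := by
  split at h
  · rcases h with ⟨rfl, h1, h2⟩ | ⟨_, h1, h2, h3, h4, h5⟩
    · exact ⟨h1, h2, h1, h2, by omega⟩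
    · exact ⟨h1, h2, h3, h4, by omega⟩
  · rcases h with ⟨rfl, h1, h2⟩ | ⟨_, h1, h2, h3, h4, h5⟩
    · exact ⟨h1, h2, h1, h2, by omega⟩
    · exact ⟨h3, h4, h1, h2, by omega⟩

/-- Staying put is always a valid step. -/
lemma zig_step_refl (n m a : ℕ) (h1 : 1 ≤ a) (h2 : a ≤ n) :
    (if Even m then zigzagRel n else flip (zigzagRel n)) a a := by
  split
  · exact Or.inl ⟨rfl, h1, h2⟩
  · exact Or.inl ⟨rfl, h1, h2⟩

/-- Reachability: if `b` is within "adjusted distance" `m` of `a`, then `altComp m a b`. -/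
lemma zig_reach (n : ℕ) : ∀ m a b, 1 ≤ a → a ≤ n → 1 ≤ b → b ≤ n →
    (b = a ∨ (a - b) + (b - a) + a % 2 ≤ m) → altComp (zigzagRel n) m a b := by
  intro m
  induction m with
  | zero =>
    intro a b _ _ _ _ h
    have : a = b := by omega
    exact this
  | succ m ih =>
    intro a b ha1 ha2 hb1 hb2 h
    rcases eq_or_ne b a with rfl | hab
    · exact ⟨b, ih b b hb1 hb2 hb1 hb2 (Or.inl rfl), zig_step_refl n m b hb1 hb2⟩
    have hd : (a - b) + (b - a) + a % 2 ≤ m + 1 := h.resolve_left hab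
    by_cases hm : (a - b) + (b - a) + a % 2 ≤ m
    · exact ⟨b, ih a b ha1 ha2 hb1 hb2 (Or.inr hm), zig_step_refl n m b hb1 hb2⟩
    · have hsum : (a - b) + (b - a) + a % 2 = m + 1 := by omega
      rcases lt_or_gt_of_ne hab with hlt | hgt
      · -- b < a : come from c = b + 1
        set c := b + 1 with hc
        have hcb : c ≤ a := by omega
        have hcond : c = a ∨ (a - c) + (c - a) + a % 2 ≤ m := by omega
        have hreach : altComp (zigzagRel n) m a c :=
          ih a c ha1 ha2 (by omega) (by omega) hcond
        have hpar : c % 2 = m % 2 := by omega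
        refine ⟨c, hreach, ?_⟩
        rcases Nat.even_or_odd m with he | ho
        · rw [if_pos he]
          have hce : Even c := by
            rw [Nat.even_iff] at he ⊢; omega
          exact Or.inr ⟨hce, by omega, by omega, hb1, hb2, Or.inl (by omega)⟩
        · rw [if_neg (Nat.not_even_iff_odd.mpr ho)]
          have hbe : Even b := by
            rw [Nat.odd_iff] at ho; rw [Nat.even_iff]; omega
          exact Or.inr ⟨hbe, hb1, hb2, by omega, by omega, Or.inr (by omega)⟩
      · -- a < b : come from c = b - 1
        set c := b - 1 with hc
        have hac : a ≤ c := by omega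
        have hcond : c = a ∨ (a - c) + (c - a) + a % 2 ≤ m := by omega
        have hreach : altComp (zigzagRel n) m a c :=
          ih a c ha1 ha2 (by omega) (by omega) hcond
        have hpar : c % 2 = m % 2 := by omega
        refine ⟨c, hreach, ?_⟩
        rcases Nat.even_or_odd m with he | ho
        · rw [if_pos he]
          have hce : Even c := by
            rw [Nat.even_iff] at he ⊢; omega
          exact Or.inr ⟨hce, by omega, by omega, hb1, hb2, Or.inr (by omega)⟩
        · rw [if_neg (Nat.not_even_iff_odd.mpr ho)]
          have hbe : Even b := by
            rw [Nat.odd_iff] at ho; rw [Nat.even_iff]; omega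
          exact Or.inr ⟨hbe, hb1, hb2, by omega, by omega, Or.inl (by omega)⟩

/-- Any pair related by a nonempty alternating composite lies in `I × I`. -/
lemma zig_bounds (n : ℕ) : ∀ m a b, altComp (zigzagRel n) (m + 1) a b →
    1 ≤ a ∧ a ≤ n ∧ 1 ≤ b ∧ b ≤ n := by
  intro m
  induction m with
  | zero =>
    rintro a b ⟨c, hac, hstep⟩
    have hac' : a = c := hac
    obtain ⟨h1, h2, h3, h4, _⟩ := zig_step_prop hstep
    exact ⟨hac' ▸ h1, hac' ▸ h2, h3, h4⟩
  | succ m ih =>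
    rintro a b ⟨c, hac, hstep⟩
    obtain ⟨h1, h2, _⟩ := ih a c hac
    obtain ⟨_, _, h3, h4, _⟩ := zig_step_prop hstep
    exact ⟨h1, h2, h3, h4⟩

/-- The key obstruction: from an odd start one can advance at most `m - 1` in `m` factors. -/
lemma zig_odd_ub (n : ℕ) : ∀ m a b, a % 2 = 1 → altComp (zigzagRel n) m a b →
    b + 1 ≤ a + m ∨ m = 0 := by
  intro m
  induction m with
  | zero => intro a b _ _; exact Or.inr rfl
  | succ m ih =>
    rintro a b ha ⟨c, hac, hstep⟩
    rcases ih a c ha hac with h | rfl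
    · obtain ⟨_, _, _, _, h5⟩ := zig_step_prop hstep
      exact Or.inl (by omega)
    · -- m = 0, so c = a (odd) and the step is `zigzagRel n`
      have hac' : a = c := hac
      subst hac'
      rw [if_pos (Even.zero)] at hstep
      rcases hstep with ⟨rfl, _, _⟩ | ⟨he, _⟩
      · exact Or.inl (by omega)
      · rw [Nat.even_iff] at he; omega

/-- For `I = {1,…,n}` with the zigzag partial order `⪯`, the `n`-fold alternating composite
`⪯ ∘ ⪯⁻¹ ∘ ⪯ ∘ …` equals the total relation `I × I`, but no proper initial subcomposite
(with `1 ≤ m < n` factors) does. -/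
theorem altComp_zigzag_total_iff (n : ℕ) (hn : 0 < n) :
    altComp (zigzagRel n) n = (fun a b => (1 ≤ a ∧ a ≤ n) ∧ (1 ≤ b ∧ b ≤ n)) ∧
      ∀ m : ℕ, 1 ≤ m → m < n →
        altComp (zigzagRel n) m ≠ (fun a b => (1 ≤ a ∧ a ≤ n) ∧ (1 ≤ b ∧ b ≤ n)) := by
  constructor
  · funext a b
    apply propext
    constructor
    · intro h
      obtain ⟨n', rfl⟩ : ∃ n', n = n' + 1 := ⟨n - 1, by omega⟩
      obtain ⟨h1, h2, h3, h4⟩ := zig_bounds _ n' a b h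
      exact ⟨⟨h1, h2⟩, ⟨h3, h4⟩⟩
    · rintro ⟨⟨ha1, ha2⟩, hb1, hb2⟩
      exact zig_reach n n a b ha1 ha2 hb1 hb2 (by omega)
  · intro m hm1 hm2 heq
    have h1n : altComp (zigzagRel n) m 1 n := by
      have := congrFun (congrFun heq 1) n
      rw [this]
      exact ⟨⟨le_refl 1, hn⟩, hn, le_refl n⟩
    rcases zig_odd_ub n m 1 n (by omega) h1n with h | h <;> omega
end

section
/- In the setting of the previous statement, for each m with 1 ≤ m ≤ n, the m-fold alternating composite ⪯ ∘ ⪯⁻¹ ∘ … (m factors, starting with ⪯) contains the pair (1, m) but does not contain (1, m') for any m' > m. In particular (1,n) first appears at the n-fold composite. -/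

lemma zig_diff {n a b : ℕ} (h : zigzagRel n a b) : b ≤ a + 1 ∧ a ≤ b + 1 := by
  rcases h with ⟨h, _⟩ | ⟨_, h1, _, _, _, h | h⟩ <;> omega

lemma altComp_bound (n : ℕ) : ∀ m b, 1 ≤ m → altComp (zigzagRel n) m 1 b → b ≤ m := by
  intro m
  induction m with
  | zero => omega
  | succ m ih =>
    intro b _ h
    obtain ⟨c, hc, hr⟩ := h
    rcases Nat.eq_zero_or_pos m with rfl | hm
    · simp only [altComp] at hc
      subst hc
      simp only [Even.zero, if_true] at hr
      rcases hr with ⟨h, _⟩ | ⟨he, _⟩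
      · omega
      · exact absurd he (by decide)
    · have hcb : c ≤ m := ih c hm hc
      split at hr
      · have := zig_diff hr; omega
      · have := zig_diff hr; omega

lemma altComp_pos (n : ℕ) : ∀ m, 1 ≤ m → m ≤ n → altComp (zigzagRel n) m 1 m := by
  intro m
  induction m with
  | zero => omega
  | succ m ih =>
    intro _ hmn
    rcases Nat.eq_zero_or_pos m with rfl | hm
    · refine ⟨1, rfl, ?_⟩
      simp only [Even.zero, if_true]
      exact Or.inl ⟨rfl, le_refl 1, hmn⟩
    · refine ⟨m, ih hm (by omega), ?_⟩
      rcases Nat.even_or_odd m with he | ho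
      · simp only [if_pos he]
        exact Or.inr ⟨he, hm, by omega, by omega, hmn, Or.inr rfl⟩
      · rw [if_neg (Nat.not_even_iff_odd.symm.mp ho)]
        exact Or.inr ⟨by simpa using ho.add_one, by omega, hmn, hm, by omega, Or.inl (by omega)⟩

/-- For `I = {1,…,n}` with the zigzag partial order `⪯`, for each `1 ≤ m ≤ n` the `m`-fold
alternating composite `⪯ ∘ ⪯⁻¹ ∘ …` contains the pair `(1, m)`, but contains no pair
`(1, m')` with `m < m' ≤ n`.  In particular `(1, n)` first appears at the `n`-fold
composite. -/
theorem altComp_zigzag_pair (n : ℕ) (hn : 0 < n) :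
    ∀ m : ℕ, 1 ≤ m → m ≤ n →
      altComp (zigzagRel n) m 1 m ∧
        ∀ m' : ℕ, m < m' → m' ≤ n → ¬ altComp (zigzagRel n) m 1 m' := by
  intro m hm hmn
  refine ⟨altComp_pos n m hm hmn, fun m' hmm' _ h => ?_⟩
  have := altComp_bound n m m' hm h
  omega
end

section
/- With notation as in the main construction (G the group of permutations of X = ⋃X_i moving only finitely many points between the infinite sets X_i), the map ρ ↦ S_ρ respects the 5-ary operation Q: S_{Q(ρ₁,σ₁,ρ₂,σ₂,τ)} = {f∈G : ∃ g,h∈G, g∈S_{ρ₁}, g⁻¹f∈S_{σ₁}, h∈S_{ρ₂}, h⁻¹f∈S_{σ₂}, g⁻¹h∈S_τ}, where Q(ρ₁,σ₁,ρ₂,σ₂,τ) = {(i,j) : ∃k,ℓ, (i,k)∈ρ₁, (k,j)∈σ₁, (i,ℓ)∈ρ₂, (ℓ,j)∈σ₂, (k,ℓ)∈τ}. -/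
open Pointwise

/-- Jónsson's 5-ary operation `Q` on binary relations. -/
def Qrel {I : Type*} (ρ₁ σ₁ ρ₂ σ₂ τ : I → I → Prop) : I → I → Prop :=
  fun i j => ∃ k l, ρ₁ i k ∧ σ₁ k j ∧ ρ₂ i l ∧ σ₂ l j ∧ τ k l

/-!
Given `f ∈ S_Q`, choose for every `x` witnesses `k x, l x` of `Q (ι x) (ι (x f))`, taking
`k x = l x = ι x` whenever `f` keeps `x` in its fiber (possible by reflexivity). Then `k` and `l`
differ from `ι` at finitely many points only, so, the fibers being infinite, there are `g, h ∈ G`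
with `ι (x g) = k x` and `ι (x h) = l x`; these are the required `g` and `h`. Conversely, `g` and
`h` provide the witnesses `ι (x g)` and `ι (x h)`.
-/

open Cardinal in
theorem Cardinal.mk_eq_of_union_eq_union_finite {α : Type*} {s t D : Set α}
    (hs : s.Infinite) (hD : D.Finite) (h : s ∪ D = t ∪ D) : #s = #t := by
  have mk_union {u : Set α} (hu : u.Infinite) : #(u ∪ D : Set α) = #u :=
    le_antisymm
      ((mk_union_le u D).trans_eq <| add_eq_left (infinite_iff.1 hu.to_subtype)
        (hD.lt_aleph0.le.trans (infinite_iff.1 hu.to_subtype)))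
      (mk_le_mk_of_subset Set.subset_union_left)
  have ht : t.Infinite := fun ht => hs ((ht.union hD).subset (h ▸ Set.subset_union_left))
  rw [← mk_union hs, ← mk_union ht, h]

theorem exists_perm_comp_eq_of_finite_ne {X I : Type*} {ι : X → I}
    (hfib : ∀ i : I, {x | ι x = i}.Infinite) {κ : X → I} (hfin : {x | κ x ≠ ι x}.Finite) :
    ∃ e : Equiv.Perm X, ∀ x, ι (e x) = κ x := by
  have hfiber (i : I) : Cardinal.mk {x | κ x = i} = Cardinal.mk {x | ι x = i} := by
    refine (Cardinal.mk_eq_of_union_eq_union_finite (hfib i) hfin ?_).symm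
    ext x
    by_cases hx : κ x = ι x <;> simp [hx]
  exact ⟨Equiv.ofFiberEquiv fun i => (Cardinal.eq.1 (hfiber i)).some,
    Equiv.ofFiberEquiv_map _⟩

section restrictedPermGroup

variable {X I : Type*} {ι : X → I}

theorem inv_mul_mem_restrictedPermGroup {a b : (Equiv.Perm X)ᵐᵒᵖ}
    (ha : a ∈ restrictedPermGroup ι) (hb : b ∈ restrictedPermGroup ι) :
    a⁻¹ * b ∈ restrictedPermGroup ι := by
  -- `a⁻¹ * b` sends `a y` to `b y`, so it changes the fiber of `a y` only if `a` or `b`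
  -- changes the fiber of `y`.
  refine ((ha.union hb).image a.unop).subset fun x hx => ⟨a.unop⁻¹ x, ?_, by simp⟩
  by_contra! hy
  simp only [Set.mem_union, Set.mem_ofPred_eq, not_or, not_not] at hy
  exact hx (by simpa using hy.2.trans hy.1.symm)

theorem inv_mul_mem_relSet_iff {ρ : I → I → Prop} {a b : (Equiv.Perm X)ᵐᵒᵖ}
    (ha : a ∈ restrictedPermGroup ι) (hb : b ∈ restrictedPermGroup ι) :
    a⁻¹ * b ∈ relSet ι ρ ↔ ∀ x, ρ (ι (a.unop x)) (ι (b.unop x)) := by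
  rw [relSet, Set.mem_ofPred_eq, and_iff_right (inv_mul_mem_restrictedPermGroup ha hb),
    ← a.unop.forall_congr_right]
  simp

theorem exists_mem_restrictedPermGroup_comp_eq (hfib : ∀ i : I, {x | ι x = i}.Infinite)
    {κ : X → I} (hfin : {x | κ x ≠ ι x}.Finite) :
    ∃ g ∈ restrictedPermGroup ι, ∀ x, ι (g.unop x) = κ x := by
  obtain ⟨e, he⟩ := exists_perm_comp_eq_of_finite_ne hfib hfin
  exact ⟨MulOpposite.op e, by simpa [restrictedPermGroup, he] using hfin, he⟩

end restrictedPermGroup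

theorem Qrel.exists_witnesses {I : Type*} {ρ₁ σ₁ ρ₂ σ₂ τ : I → I → Prop}
    (hρ₁ : Reflexive ρ₁) (hσ₁ : Reflexive σ₁) (hρ₂ : Reflexive ρ₂)
    (hσ₂ : Reflexive σ₂) (hτ : Reflexive τ) {i j : I} (hQ : Qrel ρ₁ σ₁ ρ₂ σ₂ τ i j) :
    ∃ k l, ρ₁ i k ∧ σ₁ k j ∧ ρ₂ i l ∧ σ₂ l j ∧ τ k l ∧ (j = i → k = i ∧ l = i) := by
  by_cases hji : j = i
  · subst hji
    exact ⟨j, j, hρ₁ j, hσ₁ j, hρ₂ j, hσ₂ j, hτ j, fun _ => ⟨rfl, rfl⟩⟩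
  · obtain ⟨k, l, hQ⟩ := hQ
    exact ⟨k, l, by simpa [hji] using hQ⟩

/-- The map `ρ ↦ S_ρ` respects the 5-ary operation `Q`: the set associated to
`Q(ρ₁,σ₁,ρ₂,σ₂,τ)` is the corresponding 5-ary operation applied to the sets
`S_{ρ₁}, S_{σ₁}, S_{ρ₂}, S_{σ₂}, S_τ`. -/
theorem relSet_Q {X I : Type*} (ι : X → I)
    (hfib : ∀ i : I, {x | ι x = i}.Infinite)
    (ρ₁ σ₁ ρ₂ σ₂ τ : I → I → Prop)
    (hρ₁ : Reflexive ρ₁) (hσ₁ : Reflexive σ₁) (hρ₂ : Reflexive ρ₂)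
    (hσ₂ : Reflexive σ₂) (hτ : Reflexive τ) :
    relSet ι (Qrel ρ₁ σ₁ ρ₂ σ₂ τ) =
      {f | f ∈ restrictedPermGroup ι ∧ ∃ g h : (Equiv.Perm X)ᵐᵒᵖ,
        g ∈ relSet ι ρ₁ ∧ g⁻¹ * f ∈ relSet ι σ₁ ∧
        h ∈ relSet ι ρ₂ ∧ h⁻¹ * f ∈ relSet ι σ₂ ∧ g⁻¹ * h ∈ relSet ι τ} := by
  ext f
  constructor
  · rintro ⟨hf, hQ⟩
    choose k l hk₁ hk₂ hl₁ hl₂ hkl hdiag using fun x =>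
      (hQ x).exists_witnesses hρ₁ hσ₁ hρ₂ hσ₂ hτ
    obtain ⟨g, hg, hgk⟩ := exists_mem_restrictedPermGroup_comp_eq hfib (κ := k)
      (hf.subset fun x hx hfx => hx (hdiag x hfx).1)
    obtain ⟨h, hh, hhl⟩ := exists_mem_restrictedPermGroup_comp_eq hfib (κ := l)
      (hf.subset fun x hx hfx => hx (hdiag x hfx).2)
    refine ⟨hf, g, h, ⟨hg, fun x => ?_⟩, (inv_mul_mem_relSet_iff hg hf).2 fun x => ?_,
      ⟨hh, fun x => ?_⟩, (inv_mul_mem_relSet_iff hh hf).2 fun x => ?_,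
      (inv_mul_mem_relSet_iff hg hh).2 fun x => ?_⟩ <;>
    simp only [hgk, hhl]
    exacts [hk₁ x, hk₂ x, hl₁ x, hl₂ x, hkl x]
  · rintro ⟨hf, g, h, ⟨hg, hρg⟩, hgf, ⟨hh, hρh⟩, hhf, hgh⟩
    rw [inv_mul_mem_relSet_iff hg hf] at hgf
    rw [inv_mul_mem_relSet_iff hh hf] at hhf
    rw [inv_mul_mem_relSet_iff hg hh] at hgh
    exact ⟨hf, fun x => ⟨_, _, hρg x, hgf x, hρh x, hhf x, hgh x⟩⟩
end
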